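/- Let P̂ be symmetric with 0 ⪯ P̂ ⪯ I, eigen-decomposition P̂ = ∑_j λ̂_j θ̂_j θ̂_jᵀ with λ̂_1 ≥ … ≥ λ̂_d, Π̂ = ∑_{j≤m} θ̂_j θ̂_jᵀ, and let Π* be any symmetric PSD matrix. Then trace[(I − P̂)Π*] ≥ (1 − λ̂_{m+1}) · trace[(I − Π̂)Π*]. -/

import Mathlib

/-!
Write `P = ∑ⱼ λⱼ θⱼθⱼᵀ` and `I = ∑ⱼ θⱼθⱼᵀ`. With `qⱼ = θⱼᵀ Π* θⱼ ≥ 0`, both traces are weighted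
sums of the `qⱼ`: the left side has weights `1 - λⱼ`, the right side `(1 - λₘ₊₁)·1[j > m]`. The
weights compare termwise, because `λⱼ ≤ 1` (from `P ⪯ I`) and `λⱼ ≤ λₘ₊₁` for `j > m`.
-/

open Matrix

namespace Matrix

variable {n R : Type*} [Fintype n] [CommRing R]

theorem trace_vecMulVec_self_mul (u : n → R) (A : Matrix n n R) :
    (vecMulVec u u * A).trace = u ⬝ᵥ (A *ᵥ u) := by
  rw [vecMulVec_mul, trace_vecMulVec, dotProduct_mulVec, dotProduct_comm]

theorem trace_sum_smul_vecMulVec_mul (θ : n → n → R) (c : n → R) (A : Matrix n n R) :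
    ((∑ j, c j • vecMulVec (θ j) (θ j)) * A).trace = ∑ j, c j * (θ j ⬝ᵥ (A *ᵥ θ j)) := by
  simp only [Finset.sum_mul, trace_sum, smul_mul_assoc, trace_smul, trace_vecMulVec_self_mul,
    smul_eq_mul]

variable [DecidableEq n]

theorem sum_vecMulVec_self_eq_one {θ : n → n → R}
    (horth : ∀ i j, θ i ⬝ᵥ θ j = if i = j then (1 : R) else 0) :
    ∑ j, vecMulVec (θ j) (θ j) = 1 := by
  have hrows : of θ * (of θ)ᵀ = 1 := by
    ext i j
    simpa [mul_apply, one_apply, dotProduct] using horth i j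
  rw [← mul_eq_one_comm.mp hrows]
  ext a b
  simp [mul_apply, sum_apply, vecMulVec_apply]

theorem one_sub_sum_smul_vecMulVec {θ : n → n → R}
    (horth : ∀ i j, θ i ⬝ᵥ θ j = if i = j then (1 : R) else 0) (c : n → R) :
    1 - ∑ j, c j • vecMulVec (θ j) (θ j) = ∑ j, (1 - c j) • vecMulVec (θ j) (θ j) := by
  simp only [sub_smul, one_smul, Finset.sum_sub_distrib, sum_vecMulVec_self_eq_one horth]

theorem sum_smul_vecMulVec_mulVec {θ : n → n → R}
    (horth : ∀ i j, θ i ⬝ᵥ θ j = if i = j then (1 : R) else 0) (c : n → R) (i : n) :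
    (∑ j, c j • vecMulVec (θ j) (θ j)) *ᵥ θ i = c i • θ i := by
  simp only [sum_mulVec, smul_mulVec, vecMulVec_mulVec, horth]
  simp

end Matrix

section Real

variable {n : Type*} [Fintype n]

theorem Matrix.trace_sum_smul_vecMulVec_mul_mono (θ : n → n → ℝ) {c c' : n → ℝ} (hcc' : c ≤ c')
    {A : Matrix n n ℝ} (hA : A.PosSemidef) :
    ((∑ j, c j • vecMulVec (θ j) (θ j)) * A).trace ≤
      ((∑ j, c' j • vecMulVec (θ j) (θ j)) * A).trace := by
  rw [trace_sum_smul_vecMulVec_mul, trace_sum_smul_vecMulVec_mul]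
  gcongr with j
  · simpa using hA.dotProduct_mulVec_nonneg (θ j)
  · exact hcc' j

variable [DecidableEq n]

theorem Matrix.PosSemidef.weight_nonneg {θ : n → n → ℝ}
    (horth : ∀ i j, θ i ⬝ᵥ θ j = if i = j then (1 : ℝ) else 0) {c : n → ℝ}
    (hc : (∑ j, c j • vecMulVec (θ j) (θ j)).PosSemidef) (i : n) : 0 ≤ c i := by
  simpa [sum_smul_vecMulVec_mulVec horth, horth] using hc.dotProduct_mulVec_nonneg (θ i)

end Real

theorem stmt7_general (d m : ℕ) (hmd : m < d)
    (P : Matrix (Fin d) (Fin d) ℝ)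
    (hPI : (1 - P).PosSemidef)
    (lam : Fin d → ℝ) (θ : Fin d → Fin d → ℝ)
    (horth : ∀ i j, θ i ⬝ᵥ θ j = if i = j then (1 : ℝ) else 0)
    (hdecomp : P = ∑ j, lam j • vecMulVec (θ j) (θ j))
    (hanti : Antitone lam)
    (Pis : Matrix (Fin d) (Fin d) ℝ) (hPis : Pis.PosSemidef) :
    ((1 - P) * Pis).trace ≥
      (1 - lam ⟨m, hmd⟩) *
        (((1 : Matrix (Fin d) (Fin d) ℝ) -
          ∑ j ∈ Finset.univ.filter (fun j : Fin d => (j : ℕ) < m),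
            vecMulVec (θ j) (θ j)) * Pis).trace := by
  set leading : Fin d → ℝ := fun j => if (j : ℕ) < m then 1 else 0
  have hproj : ∑ j ∈ Finset.univ.filter (fun j : Fin d => (j : ℕ) < m), vecMulVec (θ j) (θ j) =
      ∑ j, leading j • vecMulVec (θ j) (θ j) := by
    simp only [Finset.sum_filter, leading, ite_smul, one_smul, zero_smul]
  rw [hdecomp, one_sub_sum_smul_vecMulVec horth] at hPI ⊢
  rw [hproj, one_sub_sum_smul_vecMulVec horth, ge_iff_le]
  calc (1 - lam ⟨m, hmd⟩) * ((∑ j, (1 - leading j) • vecMulVec (θ j) (θ j)) * Pis).trace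
      = ((∑ j, ((1 - lam ⟨m, hmd⟩) * (1 - leading j)) • vecMulVec (θ j) (θ j)) * Pis).trace := by
        simp only [trace_sum_smul_vecMulVec_mul, Finset.mul_sum, mul_assoc]
    _ ≤ ((∑ j, (1 - lam j) • vecMulVec (θ j) (θ j)) * Pis).trace := by
        refine trace_sum_smul_vecMulVec_mul_mono θ (fun j => ?_) hPis
        have hlam_le_one : 0 ≤ 1 - lam j := hPI.weight_nonneg horth j
        by_cases hj : (j : ℕ) < m
        · simpa [leading, hj] using hlam_le_one
        · have : lam j ≤ lam ⟨m, hmd⟩ := hanti (Fin.mk_le_of_le_val (not_lt.mp hj))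
          simp only [leading, hj, if_false, sub_zero, mul_one]
          linarith

theorem stmt7 (d m : ℕ) (hm1 : 1 ≤ m) (hmd : m < d)
    (P : Matrix (Fin d) (Fin d) ℝ) (hsym : P.IsSymm)
    (hP : P.PosSemidef) (hPI : (1 - P).PosSemidef)
    (lam : Fin d → ℝ) (θ : Fin d → Fin d → ℝ)
    (horth : ∀ i j, θ i ⬝ᵥ θ j = if i = j then (1 : ℝ) else 0)
    (hdecomp : P = ∑ j, lam j • vecMulVec (θ j) (θ j))
    (hanti : Antitone lam)
    (Pis : Matrix (Fin d) (Fin d) ℝ) (hPis : Pis.PosSemidef) :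
    ((1 - P) * Pis).trace ≥
      (1 - lam ⟨m, hmd⟩) *
        (((1 : Matrix (Fin d) (Fin d) ℝ) -
          ∑ j ∈ Finset.univ.filter (fun j : Fin d => (j : ℕ) < m),
            vecMulVec (θ j) (θ j)) * Pis).trace :=
  stmt7_general d m hmd P hPI lam θ horth hdecomp hanti Pis hPis
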